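/- For the PEG G5 with the single rule E ← E₁ + E₂ / E₂ * E₂ / n (where the subscripts are precedence levels), in the precedence-level left-recursive extended semantics with the empty memoization table: matching E₁ against the subject n*n*n yields (ε, E[E[n]*E[E[n]*E[n]]]), i.e., the * operator associates to the right. -/

import Mathlib

/-- Parsing expressions over non-terminals `N` and terminals `T`. -/
inductive PExp (N T : Type) : Type where
  | empty : PExp N T
  | term : T → PExp N T
  | var : N → PExp N T
  | seq : PExp N T → PExp N T → PExp N T
  | choice : PExp N T → PExp N T → PExp N T
  | star : PExp N T → PExp N T
  | nott : PExp N T → PExp N T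

/-- A PEG: a rule for every non-terminal and a starting expression.
(A PEG whose `prod` is a total function is a closed PEG.) -/
structure PEG (N T : Type) where
  prod : N → PExp N T
  start : PExp N T

/-- Symbols of parse strings: terminals and tagged brackets `A[...]`. -/
inductive PSym (N T : Type) : Type where
  | t : T → PSym N T
  | node : N → List (PSym N T) → PSym N T

/-- Parse strings. -/
abbrev PStr (N T : Type) := List (PSym N T)

/-- Result of a match: `fail`, or a pair (remaining suffix, parse string). -/
inductive Res (N T : Type) : Type where
  | fail : Res N T
  | ok : List T → PStr N T → Res N T
/-- Parsing expressions whose non-terminal occurrences carry precedence levels. -/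
inductive PExpP (N T : Type) : Type where
  | empty : PExpP N T
  | term : T → PExpP N T
  | var : N → ℕ → PExpP N T
  | seq : PExpP N T → PExpP N T → PExpP N T
  | choice : PExpP N T → PExpP N T → PExpP N T
  | star : PExpP N T → PExpP N T
  | nott : PExpP N T → PExpP N T

/-- A PEG with precedence levels. -/
structure PEGP (N T : Type) where
  prod : N → PExpP N T
  start : PExpP N T

/-- Memoization-table entries: `fail` or a triple (suffix, parse string, level). -/
inductive ResP (N T : Type) : Type where
  | fail : ResP N T
  | ok : List T → PStr N T → ℕ → ResP N T

/-- Forget the precedence level of a table entry. -/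
def ResP.toRes {N T : Type} : ResP N T → Res N T
  | ResP.fail => Res.fail
  | ResP.ok y t _ => Res.ok y t

/-- Memoization tables whose successful entries carry precedence levels. -/
abbrev MemoP (N T : Type) := N → List T → Option (ResP N T)

/-- `L[(A,s) ↦ r]`. -/
def MemoP.update {N T : Type} [DecidableEq N] [DecidableEq T]
    (L : MemoP N T) (A : N) (s : List T) (r : ResP N T) : MemoP N T :=
  fun B u => if B = A ∧ u = s then some r else L B u

/-- The empty memoization table. -/
def MemoP.empty {N T : Type} : MemoP N T := fun _ _ => none

mutual
/-- The precedence-level left-recursive extended semantics `G[p] s L ⇝ r`. -/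
inductive LMatchP {N T : Type} [DecidableEq N] [DecidableEq T] (G : PEGP N T) :
    PExpP N T → List T → MemoP N T → Res N T → Prop where
  | empty1 : LMatchP G .empty s L (.ok s [])
  | char1 : LMatchP G (.term a) (a :: s) L (.ok s [.t a])
  | char2 : b ≠ a → LMatchP G (.term b) (a :: s) L .fail
  | char3 : LMatchP G (.term a) [] L .fail
  | lvar1 : L A s = none →
      LMatchP G (G.prod A) s (MemoP.update L A s .fail) (.ok s1 t1) →
      IncP G A s (MemoP.update L A s (.ok s1 t1 k)) (.ok s2 t2) →
      LMatchP G (.var A k) s L (.ok s2 [.node A t2])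
  | lvar2 : L A s = none →
      LMatchP G (G.prod A) s (MemoP.update L A s .fail) .fail →
      LMatchP G (.var A k) s L .fail
  | lvar3 : L A s = some .fail → LMatchP G (.var A k) s L .fail
  | lvar4 : L A s = some (.ok y t k') → k' ≤ k →
      LMatchP G (.var A k) s L (.ok y [.node A t])
  | lvar5 : L A s = some (.ok y t k') → k < k' →
      LMatchP G (.var A k) s L .fail
  | con1 : LMatchP G p1 s L (.ok s1 t1) → LMatchP G p2 s1 L (.ok s2 t2) →
      LMatchP G (.seq p1 p2) s L (.ok s2 (t1 ++ t2))
  | con2 : LMatchP G p1 s L (.ok s1 t1) → LMatchP G p2 s1 L .fail →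
      LMatchP G (.seq p1 p2) s L .fail
  | con3 : LMatchP G p1 s L .fail → LMatchP G (.seq p1 p2) s L .fail
  | ord1 : LMatchP G p1 s L (.ok s1 t1) → LMatchP G (.choice p1 p2) s L (.ok s1 t1)
  | ord2 : LMatchP G p1 s L .fail → LMatchP G p2 s L .fail →
      LMatchP G (.choice p1 p2) s L .fail
  | ord3 : LMatchP G p1 s L .fail → LMatchP G p2 s L (.ok s1 t1) →
      LMatchP G (.choice p1 p2) s L (.ok s1 t1)
  | not1 : LMatchP G p s L .fail → LMatchP G (.nott p) s L (.ok s [])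
  | not2 : LMatchP G p s L (.ok s1 t1) → LMatchP G (.nott p) s L .fail
  | rep1 : LMatchP G p s L .fail → LMatchP G (.star p) s L (.ok s [])
  | rep2 : LMatchP G p s L (.ok s1 t1) → LMatchP G (.star p) s1 L (.ok s2 t2) →
      LMatchP G (.star p) s L (.ok s2 (t1 ++ t2))

/-- The auxiliary bound-increasing relation `G[P(A)] s L ⇝INC r`. -/
inductive IncP {N T : Type} [DecidableEq N] [DecidableEq T] (G : PEGP N T) :
    N → List T → MemoP N T → Res N T → Prop where
  | inc1 : y ≠ [] →
      LMatchP G (G.prod A) (x ++ y ++ z ++ w)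
        (MemoP.update L A (x ++ y ++ z ++ w) (.ok (y ++ z ++ w) t1 k)) (.ok (z ++ w) t2) →
      IncP G A (x ++ y ++ z ++ w)
        (MemoP.update L A (x ++ y ++ z ++ w) (.ok (z ++ w) t2 k)) (.ok w t3) →
      IncP G A (x ++ y ++ z ++ w)
        (MemoP.update L A (x ++ y ++ z ++ w) (.ok (y ++ z ++ w) t1 k)) (.ok w t3)
  | inc2 : L A s = some r → LMatchP G (G.prod A) s L .fail →
      IncP G A s L (ResP.toRes r)
  | inc3 :
      LMatchP G (G.prod A) (x ++ y ++ z)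
        (MemoP.update L A (x ++ y ++ z) (.ok z t1 k)) (.ok (y ++ z) t2) →
      IncP G A (x ++ y ++ z)
        (MemoP.update L A (x ++ y ++ z) (.ok z t1 k)) (.ok z t1)
end

/-- The alphabet `{n, +, *}`. -/
inductive T5 : Type where
  | n : T5
  | plus : T5
  | times : T5
deriving DecidableEq

/-- The PEG `E ← E₁ + E₂ / E₂ * E₂ / n` (single non-terminal `E`, modelled by
`Unit`; subscripts are precedence levels), with starting expression `E₁`. -/
def G5 : PEGP Unit T5 where
  prod := fun _ => PExpP.choice
    (PExpP.seq (PExpP.seq (PExpP.var () 1) (PExpP.term T5.plus)) (PExpP.var () 2))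
    (PExpP.choice
      (PExpP.seq (PExpP.seq (PExpP.var () 2) (PExpP.term T5.times)) (PExpP.var () 2))
      (PExpP.term T5.n))
  start := PExpP.var () 1

/-- The parse string `E[n]`. -/
def E5n : PSym Unit T5 := PSym.node () [PSym.t T5.n]

/-! A left-recursive call `E_k` on `n * r` first seeds the memo entry with the bare `n`
(the recursive calls hit the `fail` entry). With the seed in the table, the first
alternative dies on the missing `+`, and the second reads `E[n] *` from the table and
parses the rest with a fresh call `E₂ r`, which by induction consumes `r` and returns its
right-nested tree. Once the entry consumes the whole subject, every alternative except the
bare `n` fails, so the growth loop stops and `*` ends up nested to the right. -/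

namespace MemoP

variable {N T : Type} [DecidableEq N] [DecidableEq T]

theorem update_apply_self (L : MemoP N T) (A : N) (s : List T) (r : ResP N T) :
    L.update A s r A s = some r := by
  simp [update]

theorem update_apply_of_ne (L : MemoP N T) (A : N) {s u : List T} (r : ResP N T)
    (h : u ≠ s) : L.update A s r A u = L A u := by
  simp [update, h]

end MemoP

section Semantics

variable {N T : Type} [DecidableEq N] [DecidableEq T] {G : PEGP N T} {L : MemoP N T}

theorem LMatchP.term_fail {a : T} {s : List T} (h : s.head? ≠ some a) :
    LMatchP G (.term a) s L .fail := by
  cases s with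
  | nil => exact .char3
  | cons b s => exact .char2 fun hab => h (by simp [hab])

theorem LMatchP.seq_var_term_fail {A : N} {s y : List T} {t : PStr N T} {k j : ℕ} {a : T}
    (hL : L A s = some (.ok y t k)) (hy : y.head? ≠ some a) :
    LMatchP G (.seq (.var A j) (.term a)) s L .fail := by
  rcases le_or_gt k j with hkj | hjk
  · exact .con2 (.lvar4 hL hkj) (.term_fail hy)
  · exact .con3 (.lvar5 hL hjk)

theorem IncP.of_no_growth {A : N} {s v z : List T} {t t' : PStr N T} {k : ℕ}
    (hv : v <:+ s) (hz : z <:+ v)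
    (h : LMatchP G (G.prod A) s (L.update A s (.ok z t k)) (.ok v t')) :
    IncP G A s (L.update A s (.ok z t k)) (.ok z t) := by
  obtain ⟨y, rfl⟩ := hz
  obtain ⟨x, rfl⟩ := hv
  rw [← List.append_assoc] at h ⊢
  exact .inc3 h

theorem IncP.of_growth {A : N} {s v v' w : List T} {t t' t'' : PStr N T} {k : ℕ}
    (hv : v <:+ s) (hv' : v' <:+ v) (hw : w <:+ v') (hne : v' ≠ v)
    (hgrow : LMatchP G (G.prod A) s (L.update A s (.ok v t k)) (.ok v' t'))
    (hnext : IncP G A s (L.update A s (.ok v' t' k)) (.ok w t'')) :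
    IncP G A s (L.update A s (.ok v t k)) (.ok w t'') := by
  obtain ⟨z, rfl⟩ := hw
  obtain ⟨y, rfl⟩ := hv'
  obtain ⟨x, rfl⟩ := hv
  have hy : y ≠ [] := by
    rintro rfl
    exact hne rfl
  simp only [← List.append_assoc] at hgrow hnext ⊢
  exact .inc1 hy hgrow hnext

end Semantics

namespace G5

open MemoP

/-- The subject `n * n * ⋯ * n` with `m` occurrences of `*`. -/
def timesChain : ℕ → List T5
  | 0 => [T5.n]
  | m + 1 => T5.n :: T5.times :: timesChain m

/-- The contents of the bracket `E[…]` for `timesChain m` with `*` nested to the right. -/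
def rightNestedTimes : ℕ → PStr Unit T5
  | 0 => [.t T5.n]
  | m + 1 => [E5n, .t T5.times, .node () (rightNestedTimes m)]

theorem prod_of_fail {L : MemoP Unit T5} {r : List T5} (h : L () (T5.n :: r) = some .fail) :
    LMatchP G5 (G5.prod ()) (T5.n :: r) L (.ok r [.t T5.n]) :=
  .ord3 (.con3 (.con3 (.lvar3 h))) (.ord3 (.con3 (.con3 (.lvar3 h))) .char1)

theorem prod_of_complete {L : MemoP Unit T5} {r : List T5} {t : PStr Unit T5} {k : ℕ}
    (h : L () (T5.n :: r) = some (.ok [] t k)) :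
    LMatchP G5 (G5.prod ()) (T5.n :: r) L (.ok r [.t T5.n]) :=
  .ord3 (.con3 (.seq_var_term_fail h (by simp)))
    (.ord3 (.con3 (.seq_var_term_fail h (by simp))) .char1)

theorem prod_times {L : MemoP Unit T5} {r r' : List T5} {t : PStr Unit T5} {k : ℕ}
    (hk : k ≤ 2) (h : L () (T5.n :: T5.times :: r) = some (.ok (T5.times :: r) [.t T5.n] k))
    (hr : LMatchP G5 (.var () 2) r L (.ok r' t)) :
    LMatchP G5 (G5.prod ()) (T5.n :: T5.times :: r) L (.ok r' (E5n :: .t T5.times :: t)) :=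
  .ord3 (.con3 (.seq_var_term_fail h (by simp)))
    (.ord1 (.con1 (.con1 (.lvar4 h hk) .char1) hr))

theorem ne_timesChain_succ_of_suffix {m : ℕ} {u : List T5} (hu : u <:+ timesChain m) :
    u ≠ timesChain (m + 1) := by
  rintro rfl
  simpa [timesChain] using hu.length_le

theorem var_timesChain (m : ℕ) {k : ℕ} {L : MemoP Unit T5} (hk : k ≤ 2)
    (hL : ∀ u, u <:+ timesChain m → L () u = none) :
    LMatchP G5 (.var () k) (timesChain m) L (.ok [] [.node () (rightNestedTimes m)]) := by
  induction m generalizing k L with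
  | zero =>
    refine .lvar1 (hL _ List.suffix_rfl) (prod_of_fail (update_apply_self ..)) ?_
    exact .of_no_growth List.nil_suffix List.suffix_rfl
      (prod_of_complete (update_apply_self ..))
  | succ m ih =>
    refine .lvar1 (hL _ List.suffix_rfl) (prod_of_fail (update_apply_self ..)) ?_
    have hrest : LMatchP G5 (.var () 2) (timesChain m)
        (L.update () (timesChain (m + 1)) (.ok (T5.times :: timesChain m) [.t T5.n] k))
        (.ok [] [.node () (rightNestedTimes m)]) := by
      refine ih le_rfl fun u hu => ?_
      rw [update_apply_of_ne _ _ _ (ne_timesChain_succ_of_suffix hu)]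
      exact hL u (hu.trans ((List.suffix_cons _ _).trans (List.suffix_cons _ _)))
    refine .of_growth (List.suffix_cons _ _) List.nil_suffix List.suffix_rfl
      (List.cons_ne_nil _ _).symm (prod_times hk (update_apply_self ..) hrest) ?_
    exact .of_no_growth (List.suffix_cons _ _) List.nil_suffix
      (prod_of_complete (update_apply_self ..))

end G5

/-- Matching `E₁` against `n*n*n` with the empty memoization table consumes the
whole subject and yields `E[E[n]*E[E[n]*E[n]]]`: `*` is right-associative. -/
theorem G5_times_right_assoc :
    LMatchP G5 (PExpP.var () 1) [T5.n, T5.times, T5.n, T5.times, T5.n] MemoP.empty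
      (Res.ok []
        [PSym.node ()
          [E5n, PSym.t T5.times, PSym.node () [E5n, PSym.t T5.times, E5n]]]) :=
  G5.var_timesChain 2 (by norm_num) fun _ _ => rfl
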